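/- arXiv:1408.0938 — 3 statements merged into one kernel-verified Lean document; each statement's English description precedes it below -/
import Mathlib

section
/- Let (𝒢_t)_{t∈[0,∞)} be a filtration on a measurable space Ω, let S : Ω → [0,∞) be 𝒢_0-measurable, let G : [0,∞) × Ω → [0,∞) be a (𝒢_t)-progressively measurable process, and let a, b ∈ [0,∞) be constants. Define S̲(ω) = max(S(ω) − a·b, 0) and S†(ω) = max(S(ω) − a·min(G_{S̲(ω)}(ω), b), 0). Then S† is a (𝒢_t)-stopping time. -/
open MeasureTheory
open scoped NNReal

/-!
Write `S̲ = S - a * b`, which is `𝒢 0`-measurable and hence a stopping time. Since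
`a * min g b ≤ a * b`, we have `S† ≤ t` iff `S̲ ≤ t` and `S ≤ t + a * min (G S̲) b`. On the event
`S̲ ≤ t` we may replace `G S̲` by `G (min S̲ t)`, the value of the progressive process `G` at the
bounded stopping time `min S̲ t ≤ t`, which is `𝒢 t`-measurable.
-/

lemma tsub_le_iff_tsub_le_and_le_add_of_le {α : Type*} [AddCommMonoid α] [PartialOrder α]
    [AddLeftMono α] [Sub α] [OrderedSub α] {s c d t : α} (hdc : d ≤ c) :
    s - d ≤ t ↔ s - c ≤ t ∧ s ≤ t + d :=
  ⟨fun h => ⟨(tsub_le_tsub_left hdc s).trans h, tsub_le_iff_right.1 h⟩,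
    fun h => tsub_le_iff_right.2 h.2⟩

namespace MeasureTheory

variable {Ω ι : Type*} {m : MeasurableSpace Ω}

lemma isStoppingTime_coe_iff [Preorder ι] {f : Filtration ι m} {τ : Ω → ι} :
    IsStoppingTime f (fun ω => (τ ω : WithTop ι)) ↔ ∀ i, MeasurableSet[f i] {ω | τ ω ≤ i} := by
  simp only [IsStoppingTime, WithTop.coe_le_coe]

lemma isStoppingTime_of_measurable_of_le [Preorder ι] [MeasurableSpace ι] [TopologicalSpace ι]
    [OpensMeasurableSpace ι] [OrderClosedTopology ι] {f : Filtration ι m} {τ : Ω → ι} {i : ι}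
    (hτ : Measurable[f i] τ) (hiτ : ∀ ω, i ≤ τ ω) :
    IsStoppingTime f (fun ω => (τ ω : WithTop ι)) := by
  refine isStoppingTime_coe_iff.2 fun j => ?_
  by_cases hij : i ≤ j
  · exact f.mono hij _ (hτ measurableSet_Iic)
  · convert @MeasurableSet.empty _ (f j)
    exact Set.eq_empty_of_forall_notMem fun ω hω => hij ((hiτ ω).trans hω)

lemma IsStronglyProgressive.stronglyMeasurable_apply_min [LinearOrder ι] [TopologicalSpace ι]
    [MeasurableSpace ι] [OrderTopology ι] [SecondCountableTopology ι] [BorelSpace ι] [Nonempty ι]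
    {f : Filtration ι m} {β : Type*} [TopologicalSpace β] {G : ι → Ω → β}
    (hG : IsStronglyProgressive f G)
    {τ : Ω → ι} (hτ : IsStoppingTime f (fun ω => (τ ω : WithTop ι))) (t : ι) :
    StronglyMeasurable[f t] (fun ω => G (min (τ ω) t) ω) := by
  have h := stronglyMeasurable_stoppedValue_of_le hG (hτ.min_const t) fun _ => min_le_right _ _
  simp only [← WithTop.coe_min] at h
  exact h

end MeasureTheory

/-- Lemma 6.4 of the paper. Let `(𝒢 t)` be a filtration, `S` a
`𝒢 0`-measurable nonnegative random time, `G` a `(𝒢 t)`-progressively measurable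
nonnegative process and `a b ≥ 0` constants. With `S̲ ω = max (S ω - a * b) 0` and
`S† ω = max (S ω - a * min (G (S̲ ω) ω) b) 0` (truncated subtraction in `ℝ≥0`),
the random time `S†` is a `(𝒢 t)`-stopping time. -/
theorem stmt2 {Ω : Type*} {m : MeasurableSpace Ω}
    (𝒢 : Filtration ℝ≥0 m)
    (S : Ω → ℝ≥0) (hS : Measurable[𝒢 0] S)
    (G : ℝ≥0 → Ω → ℝ≥0) (hG : ProgMeasurable 𝒢 G)
    (a b : ℝ≥0) :
    IsStoppingTime 𝒢 fun ω => S ω - a * min (G (S ω - a * b) ω) b := by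
  have hS₀ : Measurable[𝒢 0] fun ω => S ω - a * b := hS.sub_const _
  have hS₀_stop := isStoppingTime_of_measurable_of_le hS₀ fun _ => zero_le
  refine isStoppingTime_coe_iff.2 fun t => ?_
  have hG_t : Measurable[𝒢 t] fun ω => G (min (S ω - a * b) t) ω :=
    (hG.stronglyMeasurable_apply_min hS₀_stop t).measurable
  have hevent : {ω | S ω - a * min (G (S ω - a * b) ω) b ≤ t} =
      {ω | S ω - a * b ≤ t} ∩ {ω | S ω ≤ t + a * min (G (min (S ω - a * b) t) ω) b} := by
    ext ω
    simp only [Set.mem_ofPred_eq, Set.mem_inter_iff]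
    rw [tsub_le_iff_tsub_le_and_le_add_of_le (mul_le_mul_right (min_le_right _ _) a)]
    exact and_congr_right fun h => by rw [min_eq_left h]
  rw [hevent]
  exact (isStoppingTime_coe_iff.1 hS₀_stop t).inter <|
    measurableSet_le (hS.mono (𝒢.mono zero_le) le_rfl)
      (measurable_const.add ((hG_t.min measurable_const).const_mul a))
end

section
/- Let g : ℝ → ℝ be continuously differentiable with g(0) = g(1) = 0. Then y ↦ φ_{g,g}(y) = ∫_y^1 g(x−y) g(x) dx is twice differentiable on [0,1] (one-sidedly at the endpoints), with second derivative φ_{g,g}″(y) = −∫_y^1 g′(x−y) g′(x) dx = −φ_{g′,g′}(y) for every y ∈ [0,1]. -/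
/-!
For `u(0) = 0` and `0 ≤ y ≤ 1`, `φ_{u,v}(y) = ∫_0^1 u(max(x - y, 0)) v(x) dx` is an integral over a
fixed interval whose integrand is Lipschitz in `y`, and differentiable in `y` except at `y = x`.
Differentiating under the integral sign gives `φ_{u,v}' = -φ_{u',v}` for `u` of class `C¹` with
`u(0) = 0` and `v` continuous. Integration by parts, using `g(0) = g(1) = 0`, turns
`φ_{g,g}' = -φ_{g',g}` into `φ_{g,g'}`, and differentiating once more gives
`φ_{g,g}'' = -φ_{g',g'}`.
-/

open MeasureTheory Set Metric
open scoped Interval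

noncomputable def correlation (u v : ℝ → ℝ) (y : ℝ) : ℝ := ∫ x in y..1, u (x - y) * v x

variable {u v : ℝ → ℝ}

lemma correlation_eq_integral_comp_max_sub_zero (hu : Continuous u) (hv : Continuous v)
    (hu0 : u 0 = 0) {y : ℝ} (hy : y ∈ Icc (0 : ℝ) 1) :
    correlation u v y = ∫ x in (0 : ℝ)..1, u (max (x - y) 0) * v x := by
  have hint : ∀ a b : ℝ, IntervalIntegrable (fun x => u (max (x - y) 0) * v x) volume a b :=
    fun a b => (by fun_prop : Continuous fun x => u (max (x - y) 0) * v x).intervalIntegrable a b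
  rw [← intervalIntegral.integral_add_adjacent_intervals (hint 0 y) (hint y 1)]
  have hleft : ∫ x in (0 : ℝ)..y, u (max (x - y) 0) * v x = 0 := by
    refine (intervalIntegral.integral_congr fun x hx => ?_).trans intervalIntegral.integral_zero
    rw [uIcc_of_le hy.1] at hx
    simp [max_eq_right (sub_nonpos.2 hx.2), hu0]
  have hright : ∫ x in y..1, u (max (x - y) 0) * v x = correlation u v y := by
    refine intervalIntegral.integral_congr fun x hx => ?_
    rw [uIcc_of_le hy.2] at hx
    simp only [max_eq_left (sub_nonneg.2 hx.1)]
  rw [hleft, hright, zero_add]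

lemma hasDerivAt_comp_max_sub_zero (hu : Differentiable ℝ u) {x y : ℝ} (hxy : x ≠ y) :
    HasDerivAt (fun z => u (max (x - z) 0))
      ((Ioi y).indicator (fun x => -deriv u (x - y)) x) y := by
  rcases hxy.lt_or_gt with hlt | hgt
  · rw [indicator_of_notMem (show x ∉ Ioi y from not_lt.2 hlt.le)]
    refine (hasDerivAt_const y (u 0)).congr_of_eventuallyEq ?_
    filter_upwards [Ioi_mem_nhds hlt] with z hz
    rw [max_eq_right (by linarith [mem_Ioi.1 hz])]
  · rw [indicator_of_mem (show x ∈ Ioi y from hgt)]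
    have hsub : HasDerivAt (fun z => u (x - z)) (-deriv u (x - y)) y := by
      simpa [Function.comp_def] using (hu (x - y)).hasDerivAt.comp y ((hasDerivAt_id y).const_sub x)
    refine hsub.congr_of_eventuallyEq ?_
    filter_upwards [Iio_mem_nhds hgt] with z hz
    rw [max_eq_left (by linarith [mem_Iio.1 hz])]

lemma lipschitzOnWith_comp_max_sub_zero_mul {K : NNReal} {s t : Set ℝ} (hK : LipschitzOnWith K u t)
    {x : ℝ} (hst : MapsTo (fun z => max (x - z) 0) s t) (a : ℝ) :
    LipschitzOnWith (K * ‖a‖₊) (fun z => u (max (x - z) 0) * a) s := by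
  refine LipschitzOnWith.of_dist_le_mul fun z₁ hz₁ z₂ hz₂ => ?_
  have hmax : dist (max (x - z₁) 0) (max (x - z₂) 0) ≤ dist z₁ z₂ := by
    simpa [Real.dist_eq, abs_sub_comm] using abs_max_sub_max_le_abs (x - z₁) (x - z₂) 0
  calc dist (u (max (x - z₁) 0) * a) (u (max (x - z₂) 0) * a)
      = dist (u (max (x - z₁) 0)) (u (max (x - z₂) 0)) * ‖a‖ := by
        simp only [Real.dist_eq, ← sub_mul, abs_mul, Real.norm_eq_abs]
    _ ≤ K * dist z₁ z₂ * ‖a‖ := by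
        gcongr
        exact (hK.dist_le_mul _ (hst hz₁) _ (hst hz₂)).trans (by gcongr)
    _ = _ := by push_cast; ring

lemma integral_indicator_Ioi {f : ℝ → ℝ} {a b c : ℝ} (h : b ∈ Icc a c) :
    ∫ x in a..c, (Ioi b).indicator f x = ∫ x in b..c, f x := by
  rw [intervalIntegral.integral_of_le (h.1.trans h.2), intervalIntegral.integral_of_le h.2,
    setIntegral_indicator measurableSet_Ioi, Ioc_inter_Ioi, max_eq_right h.1]

lemma hasDerivAt_integral_comp_max_sub_zero (hu : ContDiff ℝ 1 u) (hv : Continuous v) (y : ℝ) :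
    HasDerivAt (fun z => ∫ x in (0 : ℝ)..1, u (max (x - z) 0) * v x)
      (∫ x in (0 : ℝ)..1, (Ioi y).indicator (fun x => -deriv u (x - y) * v x) x) y := by
  obtain ⟨K, hK⟩ := hu.contDiffOn.exists_lipschitzOnWith one_ne_zero (convex_Icc 0 (|y| + 2))
    isCompact_Icc
  have hmaps : ∀ x ∈ Ι (0 : ℝ) 1,
      MapsTo (fun z => max (x - z) 0) (ball y 1) (Icc 0 (|y| + 2)) := by
    intro x hx z hz
    rw [uIoc_of_le zero_le_one] at hx
    rw [mem_ball, Real.dist_eq, abs_lt] at hz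
    exact ⟨le_max_right _ _, max_le (by linarith [hx.2, neg_abs_le y]) (by positivity)⟩
  refine (intervalIntegral.hasDerivAt_integral_of_dominated_loc_of_lip
    (bound := fun x => K * |v x|) (ball_mem_nhds y one_pos) ?_ ?_ ?_ ?_ ?_ ?_).2
  · exact Filter.Eventually.of_forall fun z => (by fun_prop : Continuous _).aestronglyMeasurable
  · exact (by fun_prop : Continuous _).intervalIntegrable _ _
  · exact (by fun_prop : Continuous fun x => -deriv u (x - y) * v x).aestronglyMeasurable.indicator
      measurableSet_Ioi
  · refine Filter.Eventually.of_forall fun x hx => ?_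
    convert lipschitzOnWith_comp_max_sub_zero_mul hK (hmaps x hx) (v x) using 1
    ext
    simp
  · exact (by fun_prop : Continuous _).intervalIntegrable _ _
  · filter_upwards [compl_mem_ae_iff.mpr (measure_singleton y)] with x hxy _
    rw [indicator_mul_left]
    exact (hasDerivAt_comp_max_sub_zero hu.differentiable_one hxy).mul_const (v x)

lemma hasDerivWithinAt_correlation (hu : ContDiff ℝ 1 u) (hu0 : u 0 = 0) (hv : Continuous v)
    {y : ℝ} (hy : y ∈ Icc (0 : ℝ) 1) :
    HasDerivWithinAt (correlation u v) (-correlation (deriv u) v y) (Icc 0 1) y := by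
  have hderiv := (hasDerivAt_integral_comp_max_sub_zero hu hv y).hasDerivWithinAt (s := Icc 0 1)
  rw [integral_indicator_Ioi hy] at hderiv
  simp only [neg_mul, intervalIntegral.integral_neg] at hderiv
  exact hderiv.congr
    (fun z hz => correlation_eq_integral_comp_max_sub_zero hu.continuous hv hu0 hz)
    (correlation_eq_integral_comp_max_sub_zero hu.continuous hv hu0 hy)

lemma neg_correlation_deriv_left (hu : ContDiff ℝ 1 u) (hv : ContDiff ℝ 1 v) (hu0 : u 0 = 0)
    (hv1 : v 1 = 0) (y : ℝ) :
    -correlation (deriv u) v y = correlation u (deriv v) y := by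
  have hshift : ∀ x, HasDerivAt (fun x => u (x - y)) (deriv u (x - y)) x := fun x =>
    (hu.differentiable_one (x - y)).hasDerivAt.comp_sub_const x y
  have hibp := intervalIntegral.integral_mul_deriv_eq_deriv_mul (a := y) (b := 1)
    (fun x _ => hshift x) (fun x _ => (hv.differentiable_one x).hasDerivAt)
    (((hu.continuous_deriv le_rfl).comp (continuous_sub_right y)).intervalIntegrable _ _)
    ((hv.continuous_deriv le_rfl).intervalIntegrable _ _)
  simp only [sub_self, hu0, hv1, mul_zero, zero_mul, zero_sub] at hibp
  exact hibp.symm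

/-- For `g : ℝ → ℝ` continuously differentiable with `g 0 = g 1 = 0`,
the function `φ_{g,g} : y ↦ ∫_y^1 g(x-y) g(x) dx` is twice differentiable on `[0,1]`
(one-sidedly at the endpoints), with second derivative
`φ_{g,g}''(y) = -∫_y^1 g'(x-y) g'(x) dx = -φ_{g',g'}(y)` at every `y ∈ [0,1]`. -/
theorem stmt5 (g : ℝ → ℝ) (hg : ContDiff ℝ 1 g) (h0 : g 0 = 0) (h1 : g 1 = 0) :
    ∃ φ' : ℝ → ℝ,
      (∀ y ∈ Set.Icc (0 : ℝ) 1,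
        HasDerivWithinAt (fun z => ∫ x in z..1, g (x - z) * g x) (φ' y) (Set.Icc 0 1) y) ∧
      (∀ y ∈ Set.Icc (0 : ℝ) 1,
        HasDerivWithinAt φ'
          (-∫ x in y..1, deriv g (x - y) * deriv g x) (Set.Icc 0 1) y) := by
  refine ⟨correlation g (deriv g), fun y hy => ?_, fun y hy => ?_⟩
  · have hfirst := hasDerivWithinAt_correlation hg h0 hg.continuous hy
    rwa [neg_correlation_deriv_left hg hg h0 h1] at hfirst
  · exact hasDerivWithinAt_correlation hg h0 (hg.continuous_deriv le_rfl) hy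
end

section
/- Let g : ℝ → ℝ be continuously differentiable with g(0) = g(1) = 0. Then ∫_0^1 φ_{g,g}(y) φ_{g′,g′}(y) dy = ∫_0^1 (φ_{g′,g}(y))² dy, i.e. ∫_0^1 (∫_y^1 g(x−y)g(x) dx)(∫_y^1 g′(x−y)g′(x) dx) dy = ∫_0^1 (∫_y^1 g′(x−y)g(x) dx)² dy. -/
/-!
By the Leibniz rule, `φ_{u,v}' = -φ_{u',v} - u(0) v`, and integration by parts in `x` gives
`φ_{g,g'} = -φ_{g',g}` since `g` vanishes at `0` and `1`. Hence `φ_{g,g}' = -φ_{g',g}` and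
`φ_{g',g}' = φ_{g',g'}`, and one integration by parts in `y` turns `∫ φ_{g,g} φ_{g',g'}` into
`∫ φ_{g',g}²`. The boundary terms vanish: `φ_{g,g}(1) = 0` is an integral over `[1, 1]`, and
`φ_{g',g}(0) = ∫₀¹ g' g = (g(1)² - g(0)²) / 2 = 0`.
-/

open MeasureTheory Set Filter intervalIntegral Metric ContinuousLinearMap
open scoped Interval

theorem hasDerivAt_intervalIntegral_param {k k' : ℝ → ℝ → ℝ} (hk : Continuous ↿k)
    (hk' : Continuous ↿k') (hderiv : ∀ c x, HasDerivAt (k · x) (k' c x) c) (a b c : ℝ) :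
    HasDerivAt (fun c => ∫ x in a..b, k c x) (∫ x in a..b, k' c x) c := by
  obtain ⟨M, hM⟩ := ((isCompact_closedBall c 1).prod isCompact_uIcc).exists_bound_of_continuousOn
    (s := closedBall c 1 ×ˢ [[a, b]]) hk'.continuousOn
  refine (hasDerivAt_integral_of_dominated_loc_of_deriv_le (bound := fun _ => M)
    (closedBall_mem_nhds c one_pos) (Eventually.of_forall fun c => ?_) ?_ ?_ ?_
    intervalIntegrable_const ?_).2
  · exact (hk.comp (Continuous.prodMk_right c)).aestronglyMeasurable
  · exact (hk.comp (Continuous.prodMk_right c)).intervalIntegrable _ _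
  · exact (hk'.comp (Continuous.prodMk_right c)).aestronglyMeasurable
  · exact Eventually.of_forall fun x hx c' hc' => hM (c', x) ⟨hc', uIoc_subset_uIcc hx⟩
  · exact Eventually.of_forall fun x _ c' _ => hderiv c' x

-- Leibniz rule: both partial derivatives of `(s, c) ↦ ∫ x in s..b, k c x` are continuous, so it
-- is differentiable, in particular along the diagonal.
theorem hasDerivAt_intervalIntegral_param_lowerLimit {k k' : ℝ → ℝ → ℝ} (hk : Continuous ↿k)
    (hk' : Continuous ↿k') (hderiv : ∀ c x, HasDerivAt (k · x) (k' c x) c) (b y : ℝ) :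
    HasDerivAt (fun y => ∫ x in y..b, k y x) ((∫ x in y..b, k' y x) - k y y) y := by
  have hF := hasStrictFDerivAt_uncurry_coprod (u := (y, y)) (f := fun s c => ∫ x in s..b, k c x)
    (f₁ := fun s c => toSpanSingleton ℝ (-k c s))
    (f₂ := fun s c => toSpanSingleton ℝ (∫ x in s..b, k' c x))
    (Eventually.of_forall fun p => ?_) (Eventually.of_forall fun p => ?_) ?_ ?_
  · have hdiag : HasFDerivAt (fun y : ℝ => (y, y))
        ((ContinuousLinearMap.id ℝ ℝ).prod (ContinuousLinearMap.id ℝ ℝ)) y :=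
      (hasFDerivAt_id y).prodMk (hasFDerivAt_id y)
    exact (hF.hasFDerivAt.comp (f := fun y : ℝ => (y, y)) y hdiag).hasDerivAt.congr_deriv
      (by simp [Function.HasUncurry.uncurry, neg_add_eq_sub])
  · have hc : Continuous (k p.2) := hk.comp (Continuous.prodMk_right _)
    exact (integral_hasDerivAt_left (hc.intervalIntegrable _ _)
      (hc.stronglyMeasurableAtFilter _ _) hc.continuousAt).hasFDerivAt
  · exact (hasDerivAt_intervalIntegral_param hk hk' hderiv _ _ _).hasFDerivAt
  · exact (toSpanSingletonCLE (𝕜 := ℝ)).continuous.continuousAt.comp (by fun_prop)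
  · refine (toSpanSingletonCLE (𝕜 := ℝ)).continuous.continuousAt.comp ?_
    show ContinuousAt (fun p : ℝ × ℝ => ∫ x in p.1..b, k' p.2 x) (y, y)
    simp_rw [integral_symm b]
    exact (continuous_parametric_intervalIntegral_of_continuous
      (f := fun (p : ℝ × ℝ) x => k' p.2 x) (hk'.comp (continuous_fst.snd.prodMk continuous_snd)) continuous_fst).neg.continuousAt

-- `truncatedCorrelation u v` is the paper's `φ_{u,v}`.
noncomputable def truncatedCorrelation (u v : ℝ → ℝ) (y : ℝ) : ℝ :=
  ∫ x in y..1, u (x - y) * v x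

variable {u v : ℝ → ℝ}

theorem continuous_truncatedCorrelation (hu : Continuous u) (hv : Continuous v) :
    Continuous (truncatedCorrelation u v) := by
  unfold truncatedCorrelation
  simp_rw [integral_symm 1]
  exact (continuous_parametric_intervalIntegral_of_continuous
    (f := fun y x => u (x - y) * v x) (by fun_prop) continuous_id).neg

theorem hasDerivAt_truncatedCorrelation (hu : ContDiff ℝ 1 u) (hv : Continuous v) (y : ℝ) :
    HasDerivAt (truncatedCorrelation u v)
      (-truncatedCorrelation (deriv u) v y - u 0 * v y) y := by
  have hu' : Continuous (deriv u) := hu.continuous_deriv le_rfl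
  have h := hasDerivAt_intervalIntegral_param_lowerLimit (k := fun c x => u (x - c) * v x)
    (k' := fun c x => -deriv u (x - c) * v x) (by fun_prop) (by fun_prop)
    (fun c x => (((hu.differentiable one_ne_zero _).hasDerivAt).comp_const_sub x c).mul_const _)
    1 y
  exact h.congr_deriv (by simp [truncatedCorrelation, intervalIntegral.integral_neg])

theorem truncatedCorrelation_deriv_right (hu : ContDiff ℝ 1 u) (hv : ContDiff ℝ 1 v) (y : ℝ) :
    truncatedCorrelation u (deriv v) y
      = u (1 - y) * v 1 - u 0 * v y - truncatedCorrelation (deriv u) v y := by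
  have hu' : Continuous (deriv u) := hu.continuous_deriv le_rfl
  have h := integral_mul_deriv_eq_deriv_mul (a := y) (b := 1) (u := fun x => u (x - y))
    (fun x _ => ((hu.differentiable one_ne_zero _).hasDerivAt).comp_sub_const x y)
    (fun x _ => (hv.differentiable one_ne_zero x).hasDerivAt)
    ((by fun_prop : Continuous fun x => deriv u (x - y)).intervalIntegrable _ _)
    ((hv.continuous_deriv le_rfl).intervalIntegrable _ _)
  simpa [truncatedCorrelation] using h

/-- For `g : ℝ → ℝ` continuously differentiable with `g 0 = g 1 = 0`,
`∫_0^1 φ_{g,g}(y) φ_{g',g'}(y) dy = ∫_0^1 (φ_{g',g}(y))² dy`, where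
`φ_{u,v}(y) = ∫_y^1 u(x-y) v(x) dx`. -/
theorem stmt6 (g : ℝ → ℝ) (hg : ContDiff ℝ 1 g) (h0 : g 0 = 0) (h1 : g 1 = 0) :
    ∫ y in (0:ℝ)..1,
        (∫ x in y..1, g (x - y) * g x) * ∫ x in y..1, deriv g (x - y) * deriv g x
      = ∫ y in (0:ℝ)..1, (∫ x in y..1, deriv g (x - y) * g x) ^ 2 := by
  have hg' : Continuous (deriv g) := hg.continuous_deriv le_rfl
  have hswap : truncatedCorrelation g (deriv g) = -truncatedCorrelation (deriv g) g :=
    funext fun y => by simpa [h0, h1] using truncatedCorrelation_deriv_right hg hg y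
  have hP (y : ℝ) : HasDerivAt (truncatedCorrelation g g)
      (-truncatedCorrelation (deriv g) g y) y := by
    simpa [h0] using hasDerivAt_truncatedCorrelation hg hg.continuous y
  have hQ (y : ℝ) : HasDerivAt (truncatedCorrelation (deriv g) g)
      (truncatedCorrelation (deriv g) (deriv g) y) y := by
    simpa [hswap, h0] using (hasDerivAt_truncatedCorrelation hg hg' y).neg
  have hQ0 : truncatedCorrelation (deriv g) g 0 = 0 := by
    have h := congrFun hswap 0
    simp only [truncatedCorrelation, sub_zero, mul_comm (g _), Pi.neg_apply] at h ⊢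
    linarith
  have hparts := integral_mul_deriv_eq_deriv_mul (a := 0) (b := 1) (fun y _ => hP y)
    (fun y _ => hQ y)
    ((continuous_truncatedCorrelation hg' hg.continuous).neg.intervalIntegrable _ _)
    ((continuous_truncatedCorrelation hg' hg').intervalIntegrable _ _)
  change ∫ y in (0:ℝ)..1, truncatedCorrelation g g y * truncatedCorrelation (deriv g) (deriv g) y
    = ∫ y in (0:ℝ)..1, truncatedCorrelation (deriv g) g y ^ 2
  rw [hparts, hQ0]
  simp [truncatedCorrelation, intervalIntegral.integral_neg, sq]
end
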